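/- There exists a 1-Lipschitz function h : ℝ → ℝ (i.e., |h(a) − h(b)| ≤ |a − b| for all a, b) such that (1/N) Σ_{n=1}^N h(x_{N,n}) = 0 and ∫_ℝ h(x) y_N(x) dx = x_{N,1}/(2(N−1)); consequently the Wasserstein distance between the empirical distribution 𝕡_N = (1/N) Σ_{n=1}^N δ_{x_{N,n}} and the distribution with density y_N is at least x_{N,1}/(2(N−1)). -/

import Mathlib

/-!
The test function is the distance to the nodes, `h t = infDist t {x_1, …, x_N}`: it is
1-Lipschitz and vanishes at every node, so its empirical mean is `0`. On `[x_{n+1}, x_n]` it is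
the tent `min (t - x_{n+1}) (x_n - t)`, with integral `(x_n - x_{n+1})² / 4`, and the recursion
says `S_n (x_n - x_{n+1}) = 1`, so the integral against `y_N` telescopes to
`(x_1 - x_N) / (4 (N - 1))`. Finally `x_N = -x_1`: the reflected sequence `-x_{N+1-n}` is again a
zero-sum solution with positive partial sums, and a larger initial value forces larger partial
sums throughout, so two such solutions with `S_N = 0` have the same initial value.
-/

open Finset

/-- Partial sum `S_n = x_1 + ... + x_n`. -/
noncomputable def S (x : ℕ → ℝ) (n : ℕ) : ℝ := ∑ i ∈ Finset.Icc 1 n, x i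

/-- `x_1, ..., x_N` is a solution of the recursion `x_{n+1} = x_n - 1/S_n`
with all relevant partial sums nonzero. -/
def IsSolution (N : ℕ) (x : ℕ → ℝ) : Prop :=
  ∀ n, 1 ≤ n → n ≤ N - 1 → S x n ≠ 0 ∧ x (n + 1) = x n - 1 / S x n

/-- Zero-median property: the middle value is `0` when `N` is odd, and the two middle
values are negatives of each other when `N` is even. -/
def ZeroMedian (N : ℕ) (x : ℕ → ℝ) : Prop :=
  (Odd N → x ((N + 1) / 2) = 0) ∧ (Even N → x (N / 2) = - x (N / 2 + 1))

/-- The piecewise-constant density `y_N`: it equals `S_{N,n}/(N-1)`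
(equivalently `1/((N-1)(x_{N,n} - x_{N,n+1}))`) on `[x_{N,n+1}, x_{N,n})` for
`n = 1, ..., N-1`, and `0` outside `[x_{N,N}, x_{N,1})`. -/
noncomputable def yDen (N : ℕ) (x : ℕ → ℝ) (t : ℝ) : ℝ :=
  ∑ n ∈ Finset.Icc 1 (N - 1), if x (n + 1) ≤ t ∧ t < x n then S x n / ((N : ℝ) - 1) else 0
open MeasureTheory

lemma S_one (x : ℕ → ℝ) : S x 1 = x 1 := by
  simp [S]

lemma S_succ (x : ℕ → ℝ) (n : ℕ) : S x (n + 1) = S x n + x (n + 1) :=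
  sum_Icc_succ_top (by omega) x

def IsPositiveSolution (N : ℕ) (x : ℕ → ℝ) : Prop :=
  ∀ n, 1 ≤ n → n ≤ N - 1 → 0 < S x n ∧ x (n + 1) = x n - 1 / S x n

lemma IsSolution.isPositiveSolution {N : ℕ} {x : ℕ → ℝ} (hsol : IsSolution N x)
    (hdec : ∀ n, 1 ≤ n → n < N → x (n + 1) < x n) : IsPositiveSolution N x := by
  intro n hn hnN
  obtain ⟨-, hrec⟩ := hsol n hn hnN
  have hlt := hdec n hn (by omega)
  rw [hrec, sub_lt_self_iff, one_div_pos] at hlt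
  exact ⟨hlt, hrec⟩

lemma IsSolution.sub_succ_mul_S {N : ℕ} {x : ℕ → ℝ} (hsol : IsSolution N x) {n : ℕ}
    (hn : 1 ≤ n) (hnN : n ≤ N - 1) : (x n - x (n + 1)) * S x n = 1 := by
  obtain ⟨hS, hrec⟩ := hsol n hn hnN
  rw [hrec, sub_sub_cancel, one_div_mul_cancel hS]

lemma IsPositiveSolution.lt_and_S_lt {N : ℕ} {u v : ℕ → ℝ} (hu : IsPositiveSolution N u)
    (hv : IsPositiveSolution N v) (h1 : u 1 < v 1) {n : ℕ} (hn : 1 ≤ n) (hnN : n ≤ N) :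
    u n < v n ∧ S u n < S v n := by
  induction n, hn using Nat.le_induction with
  | base => simpa only [S_one] using ⟨h1, h1⟩
  | succ m hm ih =>
    obtain ⟨hum, hSm⟩ := ih (by omega)
    obtain ⟨hSu, hru⟩ := hu m hm (by omega)
    obtain ⟨-, hrv⟩ := hv m hm (by omega)
    have hinv : 1 / S v m < 1 / S u m := one_div_lt_one_div_of_lt hSu hSm
    have hsucc : u (m + 1) < v (m + 1) := by rw [hru, hrv]; linarith
    exact ⟨hsucc, by rw [S_succ, S_succ]; linarith⟩

def reflect (N : ℕ) (x : ℕ → ℝ) (n : ℕ) : ℝ := -x (N + 1 - n)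

lemma S_reflect (N : ℕ) (x : ℕ → ℝ) {n : ℕ} (hn : n ≤ N) :
    S (reflect N x) n = S x (N - n) - S x N := by
  induction n with
  | zero => simp [S]
  | succ m ih =>
    have hm : N - m = N - (m + 1) + 1 := by omega
    rw [S_succ, ih (by omega), hm, S_succ, reflect, ← hm, Nat.add_sub_add_right]
    ring

lemma IsPositiveSolution.reflect_of_S_eq_zero {N : ℕ} {x : ℕ → ℝ}
    (hx : IsPositiveSolution N x) (hS : S x N = 0) : IsPositiveSolution N (reflect N x) := by
  intro n hn hnN
  have hS' : S (reflect N x) n = S x (N - n) := by rw [S_reflect N x (by omega), hS, sub_zero]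
  obtain ⟨hpos, hrec⟩ := hx (N - n) (by omega) (by omega)
  have hidx : N + 1 - n = N - n + 1 := by omega
  refine ⟨hS' ▸ hpos, ?_⟩
  rw [hS', reflect, reflect, Nat.add_sub_add_right, hidx, hrec]
  ring

lemma IsPositiveSolution.last_eq_neg_first {N : ℕ} {x : ℕ → ℝ} (hx : IsPositiveSolution N x)
    (hN : 1 ≤ N) (hS : S x N = 0) : x N = -x 1 := by
  have hz := hx.reflect_of_S_eq_zero hS
  have hSz : S (reflect N x) N = 0 := by rw [S_reflect N x le_rfl, hS]; simp [S]
  have hz1 : reflect N x 1 = -x N := by simp [reflect]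
  rcases lt_trichotomy (x 1) (reflect N x 1) with hlt | heq | hgt
  · have := (hx.lt_and_S_lt hz hlt hN le_rfl).2
    linarith
  · linarith
  · have := (hz.lt_and_S_lt hx hgt hN le_rfl).2
    linarith

lemma infDist_eq_min_of_gap {s : Set ℝ} {a b t : ℝ} (ha : a ∈ s) (hb : b ∈ s)
    (hgap : ∀ y ∈ s, y ≤ a ∨ b ≤ y) (hat : a ≤ t) (htb : t ≤ b) :
    Metric.infDist t s = min (t - a) (b - t) := by
  apply le_antisymm
  · apply le_min
    · simpa [Real.dist_eq, abs_of_nonneg (sub_nonneg.2 hat)] using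
        Metric.infDist_le_dist_of_mem (x := t) ha
    · simpa [Real.dist_eq, abs_of_nonpos (sub_nonpos.2 htb)] using
        Metric.infDist_le_dist_of_mem (x := t) hb
  · refine (Metric.le_infDist ⟨a, ha⟩).2 fun y hy => ?_
    rw [Real.dist_eq]
    rcases hgap y hy with hya | hby
    · exact (min_le_left _ _).trans (by rw [abs_of_nonneg (by linarith)]; linarith)
    · exact (min_le_right _ _).trans (by rw [abs_of_nonpos (by linarith)]; linarith)

lemma integral_min_sub_sub {a b : ℝ} (hab : a ≤ b) :
    ∫ t in a..b, min (t - a) (b - t) = (b - a) ^ 2 / 4 := by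
  set m := (a + b) / 2 with hm
  have hcont : Continuous fun t : ℝ => min (t - a) (b - t) := by fun_prop
  have hleft : ∫ t in a..m, min (t - a) (b - t) = ∫ t in a..m, (t - a) :=
    intervalIntegral.integral_congr fun t ht => by
      rw [Set.uIcc_of_le (by rw [hm]; linarith)] at ht
      exact min_eq_left (by linarith [ht.2, hm])
  have hright : ∫ t in m..b, min (t - a) (b - t) = ∫ t in m..b, (b - t) :=
    intervalIntegral.integral_congr fun t ht => by
      rw [Set.uIcc_of_le (by rw [hm]; linarith)] at ht
      exact min_eq_right (by linarith [ht.1, hm])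
  rw [← intervalIntegral.integral_add_adjacent_intervals (hcont.intervalIntegrable a m)
    (hcont.intervalIntegrable m b), hleft, hright]
  simp [intervalIntegral.integral_comp_sub_left (fun t => t)]
  ring

lemma integral_mul_yDen {N : ℕ} {x : ℕ → ℝ} {g : ℝ → ℝ} (hg : Continuous g)
    (hx : ∀ n ∈ Icc 1 (N - 1), x (n + 1) ≤ x n) :
    ∫ t, g t * yDen N x t =
      ∑ n ∈ Icc 1 (N - 1), S x n / ((N : ℝ) - 1) * ∫ t in x (n + 1)..x n, g t := by
  have hpiece : ∀ n t, (g t * if x (n + 1) ≤ t ∧ t < x n then S x n / ((N : ℝ) - 1) else 0)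
      = (Set.Ico (x (n + 1)) (x n)).indicator (fun t => S x n / ((N : ℝ) - 1) * g t) t := by
    intro n t
    by_cases ht : x (n + 1) ≤ t ∧ t < x n <;> simp [ht, mul_comm]
  simp only [yDen, mul_sum, hpiece]
  rw [integral_finsetSum _ fun n _ => (integrable_indicator_iff measurableSet_Ico).2
    ((hg.const_mul _).integrableOn_Icc.mono_set Set.Ico_subset_Icc_self)]
  refine sum_congr rfl fun n hn => ?_
  rw [integral_indicator measurableSet_Ico, setIntegral_congr_set Ico_ae_eq_Ioc,
    ← intervalIntegral.integral_of_le (hx n hn), intervalIntegral.integral_const_mul]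

lemma antitoneOn_Icc_of_succ_lt {N : ℕ} {x : ℕ → ℝ}
    (hdec : ∀ n, 1 ≤ n → n < N → x (n + 1) < x n) : AntitoneOn x (Set.Icc 1 N) := by
  rintro k ⟨hk, -⟩ m ⟨-, hm⟩ hkm
  induction m, hkm using Nat.le_induction with
  | base => rfl
  | succ p hkp ih => exact (hdec p (by omega) (by omega)).le.trans (ih (by omega))

lemma integral_infDist_image_Icc {N : ℕ} {x : ℕ → ℝ}
    (hdec : ∀ n, 1 ≤ n → n < N → x (n + 1) < x n) {n : ℕ} (hn : n ∈ Icc 1 (N - 1)) :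
    ∫ t in x (n + 1)..x n, Metric.infDist t (x '' Set.Icc 1 N) = (x n - x (n + 1)) ^ 2 / 4 := by
  rw [mem_Icc] at hn
  have hanti := antitoneOn_Icc_of_succ_lt hdec
  have hle : x (n + 1) ≤ x n := (hdec n hn.1 (by omega)).le
  have hgap : ∀ y ∈ x '' Set.Icc 1 N, y ≤ x (n + 1) ∨ x n ≤ y := by
    rintro _ ⟨k, hk, rfl⟩
    rcases le_or_gt k n with hkn | hnk
    · exact .inr (hanti hk ⟨hn.1, by omega⟩ hkn)
    · exact .inl (hanti (show n + 1 ∈ Set.Icc 1 N from ⟨by omega, by omega⟩) hk hnk)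
  rw [← integral_min_sub_sub hle]
  refine intervalIntegral.integral_congr fun t ht => ?_
  rw [Set.uIcc_of_le hle] at ht
  exact infDist_eq_min_of_gap ⟨n + 1, ⟨by omega, by omega⟩, rfl⟩ ⟨n, ⟨hn.1, by omega⟩, rfl⟩
    hgap ht.1 ht.2

lemma integral_infDist_mul_yDen {N : ℕ} {x : ℕ → ℝ} (hsol : IsSolution N x)
    (hdec : ∀ n, 1 ≤ n → n < N → x (n + 1) < x n) (hN : 2 ≤ N) :
    ∫ t, Metric.infDist t (x '' Set.Icc 1 N) * yDen N x t =
      (x 1 - x N) / (4 * ((N : ℝ) - 1)) := by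
  have hterm : ∀ n ∈ Icc 1 (N - 1),
      S x n / ((N : ℝ) - 1) * ((x n - x (n + 1)) ^ 2 / 4) =
        (x n - x (n + 1)) / (4 * ((N : ℝ) - 1)) := by
    intro n hn
    rw [mem_Icc] at hn
    rw [div_mul_div_comm, mul_comm ((N : ℝ) - 1)]
    congr 1
    linear_combination (x n - x (n + 1)) * hsol.sub_succ_mul_S hn.1 hn.2
  rw [integral_mul_yDen (Metric.continuous_infDist_pt _)
      fun n hn => (hdec n (mem_Icc.1 hn).1 (by grind)).le,
    sum_congr rfl fun n hn => by rw [integral_infDist_image_Icc hdec hn, hterm n hn], ← sum_div]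
  have htel : ∑ n ∈ Icc 1 (N - 1), (x n - x (n + 1)) = x 1 - x N := by
    rw [sum_congr rfl fun n _ => (neg_sub (x (n + 1)) (x n)).symm, sum_neg_distrib,
      sum_Icc_sub (by omega), Nat.sub_add_cancel (by omega), neg_sub]
  rw [htel]

/-- Lower bound on the Wasserstein distance between the empirical distribution `𝕡_N` and
the distribution with density `y_N`: there is a 1-Lipschitz `h : ℝ → ℝ` with
`(1/N) ∑_{n=1}^N h(x_{N,n}) = 0` and `∫ h(t) y_N(t) dt = x_{N,1} / (2(N-1))`; consequently
the difference of the two expectations of `h` is at least `x_{N,1} / (2(N-1))`. -/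
theorem wasserstein_lower_bound (N : ℕ) (hN : 3 ≤ N) (x : ℕ → ℝ)
    (hsol : IsSolution N x) (hdec : ∀ n, 1 ≤ n → n < N → x (n + 1) < x n)
    (hmean : ∑ i ∈ Finset.Icc 1 N, x i = 0) :
    ∃ h : ℝ → ℝ, (∀ a b, |h a - h b| ≤ |a - b|) ∧
      (1 / (N : ℝ)) * ∑ n ∈ Finset.Icc 1 N, h (x n) = 0 ∧
      (∫ t, h t * yDen N x t) = x 1 / (2 * ((N : ℝ) - 1)) ∧
      x 1 / (2 * ((N : ℝ) - 1)) ≤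
        |(1 / (N : ℝ)) * ∑ n ∈ Finset.Icc 1 N, h (x n) - ∫ t, h t * yDen N x t| := by
  have hN' : (3 : ℝ) ≤ N := by exact_mod_cast hN
  set h : ℝ → ℝ := fun t => Metric.infDist t (x '' Set.Icc 1 N)
  have hpos := hsol.isPositiveSolution hdec
  have hsum : (1 / (N : ℝ)) * ∑ n ∈ Finset.Icc 1 N, h (x n) = 0 := by
    rw [sum_eq_zero fun n hn =>
      Metric.infDist_zero_of_mem (Set.mem_image_of_mem x (by simpa using hn)), mul_zero]
  have hxN : x N = -x 1 := hpos.last_eq_neg_first (by omega) hmean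
  have hint : ∫ t, h t * yDen N x t = x 1 / (2 * ((N : ℝ) - 1)) := by
    rw [integral_infDist_mul_yDen hsol hdec (by omega), hxN]
    field_simp
    ring
  have hx1 : 0 < x 1 := by simpa [S_one] using (hpos 1 le_rfl (by omega)).1
  refine ⟨h, fun a b => by simpa [Real.dist_eq] using
    Metric.lipschitz_infDist_pt _ |>.dist_le_mul a b, hsum, hint, ?_⟩
  rw [hsum, hint, zero_sub, abs_neg, abs_of_nonneg (div_nonneg hx1.le (by linarith))]
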